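/- arXiv:1112.0118 — 2 statements merged into one kernel-verified Lean document; each statement's English description precedes it below -/
import Mathlib

section
/- For every v ∈ 𝔡_ξ and every integer M ≥ 1, one has A*_v(M) = A_{d(v)}(M). -/
open scoped BigOperators

noncomputable section

attribute [local instance 10] Classical.propDecidable

/-- The `q`-integer `[n] = (1 - q^n)/(1 - q)`. -/
def qint (q : ℝ) (n : ℕ) : ℝ := (1 - q ^ n) / (1 - q)

/-- `I(r,n)`: multi-indices of positive integers of depth `r` and weight `n`. -/
def Ifin (r n : ℕ) : Finset (Fin r → ℕ) :=
  (Fintype.piFinset fun _ : Fin r => Finset.Icc 1 n).filter fun c => (∑ i, c i) = n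

/-- `I₀(r,n)`: admissible multi-indices (first entry at least 2). -/
def I0fin (r n : ℕ) : Finset (Fin r → ℕ) :=
  (Ifin r n).filter fun c => ∀ h : 0 < r, 2 ≤ c ⟨0, h⟩

/-- The `q`-analogue of the multiple zeta value,
`ζ_q(α) = Σ_{m_1 > ... > m_r > 0} Π_j q^{(α_j - 1) m_j}/[m_j]^{α_j}`. -/
def zetaQ (q : ℝ) {r : ℕ} (α : Fin r → ℕ) : ℝ :=
  ∑' m : {m : Fin r → ℕ // (∀ i j : Fin r, i < j → m j < m i) ∧ ∀ i, 0 < m i},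
    ∏ j, q ^ ((α j - 1) * m.1 j) / qint q (m.1 j) ^ α j

/-- `K_{b,n}(M) = Σ_{α ∈ I₀(b,n)} Σ_{m_1 > ... > m_{b-1} > m_b = M} Π_j q^{(α_j-1)m_j}/[m_j]^{α_j}`. -/
def Kfun (q : ℝ) (b n M : ℕ) : ℝ :=
  ∑ α ∈ I0fin b n,
    ∑' m : {m : Fin b → ℕ //
        (∀ i j : Fin b, i < j → m j < m i) ∧
          ∀ h : 0 < b, m ⟨b - 1, Nat.sub_lt h Nat.one_pos⟩ = M},
      ∏ j, q ^ ((α j - 1) * m.1 j) / qint q (m.1 j) ^ α j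

/-- `f_ℓ(N,M) = Σ_{N = k_1 > k_2 > ... > k_ℓ > M} (q^{k_1-M}/[k_1-M]) Π_{j=2}^{ℓ} 1/[k_j-M]`. -/
def fS (q : ℝ) (l N M : ℕ) : ℝ :=
  ∑ k ∈ (Fintype.piFinset fun _ : Fin l => Finset.Ioc M N).filter
      (fun k => (∀ i j : Fin l, i < j → k j < k i) ∧ ∀ h : 0 < l, k ⟨0, h⟩ = N),
    ∏ j : Fin l, (if (j : ℕ) = 0 then q ^ (k j - M) else 1) / qint q (k j - M)

/-- `g_{ℓ,β}(M) = Σ_{M = m_1 ≥ m_2 ≥ ... ≥ m_ℓ ≥ 1} (q^{(β-1)m_1}/[m_1]^β) Π_{j=2}^{ℓ} q^{m_j}/[m_j]`. -/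
def gS (q : ℝ) (l β M : ℕ) : ℝ :=
  ∑ m ∈ (Fintype.piFinset fun _ : Fin l => Finset.Icc 1 M).filter
      (fun m => (∀ i j : Fin l, i ≤ j → m j ≤ m i) ∧ ∀ h : 0 < l, m ⟨0, h⟩ = M),
    ∏ j : Fin l, if (j : ℕ) = 0 then q ^ ((β - 1) * m j) / qint q (m j) ^ β
      else q ^ m j / qint q (m j)

/-- `h_{r,ℓ}(N_1,...,N_r,M) = Σ_{c ∈ I(r,ℓ)} (Π_{j=1}^{r-1} f_{c_j}(N_j,N_{j+1})) f_{c_r}(N_r,M)`. -/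
def hS (q : ℝ) (r l : ℕ) (N : Fin r → ℕ) (M : ℕ) : ℝ :=
  ∑ c ∈ Ifin r l,
    ∏ j : Fin r, fS q (c j) (N j) (if h : (j : ℕ) + 1 < r then N ⟨(j : ℕ) + 1, h⟩ else M)

/-- `p(n_1,...,n_s;m) = (q^{n_1-m}/[n_1-m]) Π_{j=2}^{s} 1/[n_j-m]`, with `p(∅;m) = 1`. -/
def pS (q : ℝ) {s : ℕ} (n : Fin s → ℕ) (m : ℕ) : ℝ :=
  ∏ j : Fin s, (if (j : ℕ) = 0 then q ^ (n j - m) else 1) / qint q (n j - m)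

/-! ### The algebras 𝔡, 𝔡_ξ and 𝔡₁ -/

/-- The alphabet `S = {z_k}_{k ≥ 1} ∪ {ξ_k}_{k ≥ 1}`: `Sum.inl k = z_k`, `Sum.inr k = ξ_k`. -/
abbrev Letter : Type := ℕ+ ⊕ ℕ+

/-- The noncommutative polynomial algebra 𝔡 over ℤ freely generated by `S`. -/
abbrev Dfree : Type := MonoidAlgebra ℤ (FreeMonoid Letter)

/-- The subalgebra 𝔡_ξ generated by the `ξ_k`, realized as a free algebra on `{ξ_k}_{k≥1}`. -/
abbrev DXi : Type := MonoidAlgebra ℤ (FreeMonoid ℕ+)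

/-- The subalgebra 𝔡₁ generated by `z_1` and `ξ_1`, realized as a free algebra on two letters
(`false = z_1`, `true = ξ_1`). -/
abbrev DOne : Type := MonoidAlgebra ℤ (FreeMonoid Bool)

/-- The generator `z_k` of 𝔡. -/
def zL (k : ℕ+) : Dfree := MonoidAlgebra.single (FreeMonoid.of (Sum.inl k)) 1

/-- The generator `ξ_k` of 𝔡. -/
def xiL (k : ℕ+) : Dfree := MonoidAlgebra.single (FreeMonoid.of (Sum.inr k)) 1

/-- The generator `ξ_k` of 𝔡_ξ. -/
def xiX (k : ℕ+) : DXi := MonoidAlgebra.single (FreeMonoid.of k) 1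

/-- The generator `z_1` of 𝔡₁. -/
def zO : DOne := MonoidAlgebra.single (FreeMonoid.of false) 1

/-- The generator `ξ_1` of 𝔡₁. -/
def xiO : DOne := MonoidAlgebra.single (FreeMonoid.of true) 1

/-- `z_k` for a natural number index `k ≥ 1` (junk value `0` for `k = 0`). -/
def zOf (k : ℕ) : Dfree := if h : 0 < k then zL ⟨k, h⟩ else 0

/-- `ξ_k ∈ 𝔡_ξ` for a natural number index `k ≥ 1` (junk value `0` for `k = 0`). -/
def xiOf (k : ℕ) : DXi := if h : 0 < k then xiX ⟨k, h⟩ else 0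

/-- The canonical embedding `𝔡_ξ ↪ 𝔡`. -/
def toD (v : DXi) : Dfree := MonoidAlgebra.ofCoeff (Finsupp.mapDomain (FreeMonoid.map Sum.inr) v.coeff)

/-- The canonical embedding `𝔡₁ ↪ 𝔡` (`false ↦ z_1`, `true ↦ ξ_1`). -/
def toD1 (w : DOne) : Dfree :=
  MonoidAlgebra.ofCoeff (Finsupp.mapDomain (FreeMonoid.map fun b => if b then Sum.inr 1 else Sum.inl 1) w.coeff)

/-- `J_{z_k}(m) = q^{(k-1)m}/[m]^k` and `J_{ξ_k}(m) = q^{km}/[m]^k`. -/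
def Jlet (q : ℝ) : Letter → ℕ → ℝ
  | Sum.inl k, m => q ^ (((k : ℕ) - 1) * m) / qint q m ^ (k : ℕ)
  | Sum.inr k, m => q ^ ((k : ℕ) * m) / qint q m ^ (k : ℕ)

/-- `A_w(M) = Σ_{M > m_1 > ... > m_r > 0} J_{u_1}(m_1) ⋯ J_{u_r}(m_r)` for a word `w = u_1 ⋯ u_r`. -/
def AW (q : ℝ) (w : List Letter) (M : ℕ) : ℝ :=
  ∑ m ∈ (Fintype.piFinset fun _ : Fin w.length => Finset.Ioo 0 M).filter
      (fun m => ∀ i j, i < j → m j < m i),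
    ∏ j, Jlet q (w.get j) (m j)

/-- `A*_w(M) = Σ_{M > m_1 ≥ ... ≥ m_r ≥ 1} J_{u_1}(m_1) ⋯ J_{u_r}(m_r)` for a word `w = u_1 ⋯ u_r`. -/
def AstarW (q : ℝ) (w : List Letter) (M : ℕ) : ℝ :=
  ∑ m ∈ (Fintype.piFinset fun _ : Fin w.length => Finset.Ioo 0 M).filter
      (fun m => ∀ i j, i ≤ j → m j ≤ m i),
    ∏ j, Jlet q (w.get j) (m j)

/-- The ℤ-linear extension `A(M) : 𝔡 → ℝ`. -/
def Amap (q : ℝ) (x : Dfree) (M : ℕ) : ℝ :=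
  Finsupp.sum x.coeff fun w a => (a : ℝ) * AW q (FreeMonoid.toList w) M

/-- The ℤ-linear extension `A*(M) : 𝔡 → ℝ`. -/
def Astarmap (q : ℝ) (x : Dfree) (M : ℕ) : ℝ :=
  Finsupp.sum x.coeff fun w a => (a : ℝ) * AstarW q (FreeMonoid.toList w) M

/-- The map `ρ` on words:  `ρ(1,w) = w`, `ρ(v,1) = v`,
`ρ(ξ_k v, z_ℓ w) = ξ_k ρ(v, z_ℓ w) + z_ℓ ρ(ξ_k v, w) + z_{k+ℓ} ρ(v,w)`, and
`ρ(ξ_k v, ξ_ℓ w) = ξ_k ρ(v, ξ_ℓ w) + ξ_ℓ ρ(ξ_k v, w) + ξ_{k+ℓ} ρ(v,w)`. -/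
def rhoW : List ℕ+ → List Letter → Dfree
  | [], w => MonoidAlgebra.single (FreeMonoid.ofList w) 1
  | k :: v, [] => MonoidAlgebra.single (FreeMonoid.ofList ((k :: v).map Sum.inr)) 1
  | k :: v, Sum.inl l :: w =>
      xiL k * rhoW v (Sum.inl l :: w) + zL l * rhoW (k :: v) w + zL (k + l) * rhoW v w
  | k :: v, Sum.inr l :: w =>
      xiL k * rhoW v (Sum.inr l :: w) + xiL l * rhoW (k :: v) w + xiL (k + l) * rhoW v w
  termination_by v w => v.length + w.length

/-- The ℤ-bilinear map `ρ : 𝔡_ξ × 𝔡 → 𝔡`. -/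
def rho (v : DXi) (x : Dfree) : Dfree :=
  Finsupp.sum v.coeff fun vw a =>
    Finsupp.sum x.coeff fun xw b => (a * b) • rhoW (FreeMonoid.toList vw) (FreeMonoid.toList xw)

/-- `ξ_k ∘ ·` on words: `ξ_k ∘ 1 = 0` and `ξ_k ∘ (ξ_ℓ v) = ξ_{k+ℓ} v`. -/
def circW (k : ℕ+) : List ℕ+ → DXi
  | [] => 0
  | l :: v => MonoidAlgebra.single (FreeMonoid.ofList ((k + l) :: v)) 1

/-- The ℤ-linear map `ξ_k ∘ · : 𝔡_ξ → 𝔡_ξ`. -/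
def circ (k : ℕ+) (x : DXi) : DXi :=
  Finsupp.sum x.coeff fun w a => a • circW k (FreeMonoid.toList w)

/-- The map `d` on words: `d(1) = 1` and `d(ξ_k v) = ξ_k d(v) + ξ_k ∘ d(v)`. -/
def dW : List ℕ+ → DXi
  | [] => 1
  | k :: v => xiX k * dW v + circ k (dW v)

/-- The ℤ-linear map `d : 𝔡_ξ → 𝔡_ξ`. -/
def dmap (v : DXi) : DXi := Finsupp.sum v.coeff fun w a => a • dW (FreeMonoid.toList w)

/-- The maps `φ_s` on words of 𝔡₁: `φ_0 = id`, `φ_s(1) = ξ_1 z_1^{s-1}` for `s ≥ 1`,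
`φ_s(z_1 w) = z_1 φ_s(w) + ξ_1 Σ_{i=1}^{s} z_1^i φ_{s-i}(w)`, and
`φ_s(ξ_1 w) = ξ_1 Σ_{i=0}^{s} z_1^i φ_{s-i}(w)`. -/
def phiW : ℕ → List Bool → DOne
  | s, [] =>
      if s = 0 then 1
      else MonoidAlgebra.single (FreeMonoid.ofList (true :: List.replicate (s - 1) false)) 1
  | s, false :: w =>
      zO * phiW s w +
        ∑ i ∈ Finset.Icc 1 s, xiO * zO ^ i * phiW (s - i) w
  | s, true :: w =>
      ∑ i ∈ Finset.range (s + 1), xiO * zO ^ i * phiW (s - i) w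
  termination_by _ w => w.length

/-- The ℤ-linear maps `φ_s : 𝔡₁ → 𝔡₁`. -/
def phi (s : ℕ) (x : DOne) : DOne := Finsupp.sum x.coeff fun w a => a • phiW s (FreeMonoid.toList w)

/-- `Φ_0 = id` and `Φ_ℓ = Σ_{r=1}^{ℓ} (-1)^r Σ_{c ∈ I(r,ℓ)} φ_{c_1} ⋯ φ_{c_r}` for `ℓ ≥ 1`. -/
def PhiM : ℕ → DOne → DOne
  | 0 => id
  | l + 1 => fun x =>
      ∑ r ∈ Finset.Icc 1 (l + 1),
        (-1 : ℤ) ^ r •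
          ∑ c ∈ Ifin r (l + 1), ((List.ofFn fun j : Fin r => phi (c j)).foldr (· ∘ ·) id) x

/-- `Z_s(w) = Σ_{ℓ=0}^{s} ρ(d(ξ_1^{s-ℓ}), Φ_ℓ(w))`. -/
def Zmap (s : ℕ) (w : DOne) : Dfree :=
  ∑ l ∈ Finset.range (s + 1), rho (dmap (xiX 1 ^ (s - l))) (toD1 (PhiM l w))

/-!
Both `A` and `A*` unfold along the first letter:
`A_{u w}(M) = Σ_{0<m<M} J_u(m) A_w(m)` and `A*_{u w}(M) = Σ_{0<m<M} J_u(m) A*_w(m+1)`.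
Since `A_{ξ_ℓ w}(m+1) - A_{ξ_ℓ w}(m) = J_{ξ_ℓ}(m) A_w(m)` and
`J_{ξ_k} J_{ξ_ℓ} = J_{ξ_{k+ℓ}}`, the term `ξ_k ∘ d(v)` of `d(ξ_k v)` contributes exactly
`Σ_m J_{ξ_k}(m) (A_{d v}(m+1) - A_{d v}(m))`, which shifts the argument of `A_{d v}` from `m`
to `m+1`; induction on `v` finishes the proof.
-/

open Finset

lemma Fin.strictAnti_cons {α : Type*} [Preorder α] {n : ℕ} {a : α} {f : Fin n → α} :
    StrictAnti (Fin.cons a f : Fin (n + 1) → α) ↔ (∀ j, f j < a) ∧ StrictAnti f :=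
  Fin.liftFun_cons (· > ·)

lemma Fin.antitone_cons {α : Type*} [Preorder α] {n : ℕ} {a : α} {f : Fin n → α} :
    Antitone (Fin.cons a f : Fin (n + 1) → α) ↔ (∀ j, f j ≤ a) ∧ Antitone f := by
  simp only [antitone_iff_forall_lt]
  exact Fin.liftFun_cons (· ≥ ·)

lemma Finset.sum_eq_sum_sum_cons {α β : Type*} [AddCommMonoid β] {n : ℕ}
    (X : Finset (Fin (n + 1) → α)) (S : Finset α) (T : α → Finset (Fin n → α))
    (hX : ∀ a t, Fin.cons a t ∈ X ↔ a ∈ S ∧ t ∈ T a) (f : (Fin (n + 1) → α) → β) :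
    ∑ m ∈ X, f m = ∑ a ∈ S, ∑ t ∈ T a, f (Fin.cons a t) := by
  rw [← sum_finset_product' (X.map (Fin.consEquiv fun _ => α).symm.toEmbedding) S T
    (fun p => by simp [← hX, Fin.consEquiv]), sum_map]
  simp [Fin.consEquiv]

lemma cons_mem_strictAnti_tuples_iff {n : ℕ} (M a : ℕ) (t : Fin n → ℕ) :
    Fin.cons a t ∈ (Fintype.piFinset fun _ : Fin (n + 1) => Ioo 0 M).filter
        (fun m => ∀ i j, i < j → m j < m i) ↔
      a ∈ Ioo 0 M ∧ t ∈ (Fintype.piFinset fun _ : Fin n => Ioo 0 a).filter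
        (fun m => ∀ i j, i < j → m j < m i) := by
  rw [mem_filter, mem_filter]
  change _ ∧ StrictAnti (Fin.cons a t : Fin (n + 1) → ℕ) ↔ _ ∧ _ ∧ StrictAnti t
  rw [Fin.strictAnti_cons]
  simp only [Fintype.mem_piFinset, Fin.forall_fin_succ, Fin.cons_zero, Fin.cons_succ, mem_Ioo]
  grind

lemma cons_mem_antitone_tuples_iff {n : ℕ} (M a : ℕ) (t : Fin n → ℕ) :
    Fin.cons a t ∈ (Fintype.piFinset fun _ : Fin (n + 1) => Ioo 0 M).filter
        (fun m => ∀ i j, i ≤ j → m j ≤ m i) ↔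
      a ∈ Ioo 0 M ∧ t ∈ (Fintype.piFinset fun _ : Fin n => Ioo 0 (a + 1)).filter
        (fun m => ∀ i j, i ≤ j → m j ≤ m i) := by
  rw [mem_filter, mem_filter]
  change _ ∧ Antitone (Fin.cons a t : Fin (n + 1) → ℕ) ↔ _ ∧ _ ∧ Antitone t
  rw [Fin.antitone_cons]
  simp only [Fintype.mem_piFinset, Fin.forall_fin_succ, Fin.cons_zero, Fin.cons_succ, mem_Ioo]
  grind

lemma AW_cons (q : ℝ) (u : Letter) (w : List Letter) (M : ℕ) :
    AW q (u :: w) M = ∑ m ∈ Ioo 0 M, Jlet q u m * AW q w m := by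
  refine (sum_eq_sum_sum_cons (n := w.length) _ _ _ (cons_mem_strictAnti_tuples_iff M) _).trans ?_
  refine sum_congr rfl fun a _ => ?_
  rw [AW, mul_sum]
  refine sum_congr rfl fun t _ => ?_
  exact Fin.prod_univ_succ (n := w.length) _

lemma AstarW_cons (q : ℝ) (u : Letter) (w : List Letter) (M : ℕ) :
    AstarW q (u :: w) M = ∑ m ∈ Ioo 0 M, Jlet q u m * AstarW q w (m + 1) := by
  refine (sum_eq_sum_sum_cons (n := w.length) _ _ _ (cons_mem_antitone_tuples_iff M) _).trans ?_
  refine sum_congr rfl fun a _ => ?_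
  rw [AstarW, mul_sum]
  refine sum_congr rfl fun t _ => ?_
  exact Fin.prod_univ_succ (n := w.length) _

lemma AW_nil (q : ℝ) (M : ℕ) : AW q [] M = 1 := by
  simp [AW]

lemma AstarW_nil (q : ℝ) (M : ℕ) : AstarW q [] M = 1 := by
  simp [AstarW]

lemma AW_cons_add_one (q : ℝ) (u : Letter) (w : List Letter) {m : ℕ} (hm : 0 < m) :
    AW q (u :: w) (m + 1) = AW q (u :: w) m + Jlet q u m * AW q w m := by
  rw [AW_cons, AW_cons, Ioo_add_one_right_eq_Ioc, ← Ioo_insert_right hm,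
    sum_insert right_notMem_Ioo, add_comm]

lemma Jlet_inr_mul (q : ℝ) (k l : ℕ+) (m : ℕ) :
    Jlet q (Sum.inr k) m * Jlet q (Sum.inr l) m = Jlet q (Sum.inr (k + l)) m := by
  simp only [Jlet, PNat.add_coe, add_mul, pow_add, div_mul_div_comm]

@[simp] lemma Amap_zero (q : ℝ) (M : ℕ) : Amap q 0 M = 0 := by
  simp [Amap]

@[simp] lemma Amap_add (q : ℝ) (x y : Dfree) (M : ℕ) :
    Amap q (x + y) M = Amap q x M + Amap q y M :=
  Finsupp.sum_add_index' (fun _ => by simp) (fun _ _ _ => by push_cast; ring)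

lemma Amap_single (q : ℝ) (w : FreeMonoid Letter) (a : ℤ) (M : ℕ) :
    Amap q (MonoidAlgebra.single w a) M = a * AW q w.toList M :=
  Finsupp.sum_single_index (by simp)

lemma Amap_smul (q : ℝ) (a : ℤ) (x : Dfree) (M : ℕ) :
    Amap q (a • x) M = a * Amap q x M := by
  induction x using MonoidAlgebra.induction_linear with
  | zero => simp
  | add x y hx hy => rw [smul_add, Amap_add, Amap_add, hx, hy, mul_add]
  | single w b =>
    rw [MonoidAlgebra.smul_single, Amap_single, Amap_single, smul_eq_mul]
    push_cast
    ring

@[simp] lemma Astarmap_zero (q : ℝ) (M : ℕ) : Astarmap q 0 M = 0 := by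
  simp [Astarmap]

@[simp] lemma Astarmap_add (q : ℝ) (x y : Dfree) (M : ℕ) :
    Astarmap q (x + y) M = Astarmap q x M + Astarmap q y M :=
  Finsupp.sum_add_index' (fun _ => by simp) (fun _ _ _ => by push_cast; ring)

lemma Astarmap_single (q : ℝ) (w : FreeMonoid Letter) (a : ℤ) (M : ℕ) :
    Astarmap q (MonoidAlgebra.single w a) M = a * AstarW q w.toList M :=
  Finsupp.sum_single_index (by simp)

@[simp] lemma toD_zero : toD 0 = 0 := congrArg MonoidAlgebra.ofCoeff Finsupp.mapDomain_zero

@[simp] lemma toD_add (x y : DXi) : toD (x + y) = toD x + toD y :=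
  congrArg MonoidAlgebra.ofCoeff Finsupp.mapDomain_add

lemma toD_smul (a : ℤ) (x : DXi) : toD (a • x) = a • toD x :=
  congrArg MonoidAlgebra.ofCoeff (Finsupp.mapDomain_smul a x.coeff)

lemma toD_single (w : FreeMonoid ℕ+) (a : ℤ) :
    toD (MonoidAlgebra.single w a) = MonoidAlgebra.single (FreeMonoid.map Sum.inr w) a :=
  congrArg MonoidAlgebra.ofCoeff Finsupp.mapDomain_single

lemma Amap_toD_single (q : ℝ) (w : FreeMonoid ℕ+) (a : ℤ) (M : ℕ) :
    Amap q (toD (MonoidAlgebra.single w a)) M = a * AW q (w.toList.map Sum.inr) M := by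
  rw [toD_single, Amap_single, FreeMonoid.toList_map]

@[simp] lemma circ_zero (k : ℕ+) : circ k 0 = 0 := by
  simp [circ]

@[simp] lemma circ_add (k : ℕ+) (x y : DXi) : circ k (x + y) = circ k x + circ k y :=
  Finsupp.sum_add_index' (fun _ => by simp) (fun _ _ _ => add_smul _ _ _)

lemma circ_single (k : ℕ+) (w : FreeMonoid ℕ+) (a : ℤ) :
    circ k (MonoidAlgebra.single w a) = a • circW k w.toList :=
  Finsupp.sum_single_index (by simp)

@[simp] lemma dmap_zero : dmap 0 = 0 := by
  simp [dmap]

@[simp] lemma dmap_add (x y : DXi) : dmap (x + y) = dmap x + dmap y :=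
  Finsupp.sum_add_index' (fun _ => by simp) (fun _ _ _ => add_smul _ _ _)

lemma dmap_single (w : FreeMonoid ℕ+) (a : ℤ) :
    dmap (MonoidAlgebra.single w a) = a • dW w.toList :=
  Finsupp.sum_single_index (by simp)

lemma Amap_toD_xiX_mul (q : ℝ) (k : ℕ+) (x : DXi) (M : ℕ) :
    Amap q (toD (xiX k * x)) M = ∑ m ∈ Ioo 0 M, Jlet q (Sum.inr k) m * Amap q (toD x) m := by
  induction x using MonoidAlgebra.induction_linear with
  | zero => simp
  | add x y hx hy => simp [mul_add, hx, hy, sum_add_distrib]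
  | single w b =>
    rw [xiX, MonoidAlgebra.single_mul_single, one_mul, Amap_toD_single, FreeMonoid.toList_of_mul,
      List.map_cons, AW_cons, mul_sum]
    refine sum_congr rfl fun m _ => ?_
    rw [Amap_toD_single]
    ring

lemma Amap_toD_circ (q : ℝ) (k : ℕ+) (x : DXi) (M : ℕ) :
    Amap q (toD (circ k x)) M =
      ∑ m ∈ Ioo 0 M, Jlet q (Sum.inr k) m * (Amap q (toD x) (m + 1) - Amap q (toD x) m) := by
  induction x using MonoidAlgebra.induction_linear with
  | zero => simp
  | add x y hx hy =>
    rw [circ_add, toD_add, Amap_add, hx, hy, ← sum_add_distrib]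
    refine sum_congr rfl fun m _ => ?_
    simp only [toD_add, Amap_add]
    ring
  | single w b =>
    rw [circ_single]
    induction w using FreeMonoid.casesOn with
    | one => simp [circW, Amap_toD_single, AW_nil]
    | of_mul l w =>
      have hcirc : circW k (FreeMonoid.of l * w).toList =
          MonoidAlgebra.single (FreeMonoid.of (k + l) * w) 1 := rfl
      rw [hcirc, MonoidAlgebra.smul_single, smul_eq_mul, mul_one, Amap_toD_single,
        FreeMonoid.toList_of_mul, List.map_cons, AW_cons, mul_sum]
      refine sum_congr rfl fun m hm => ?_
      rw [Amap_toD_single, Amap_toD_single, FreeMonoid.toList_of_mul, List.map_cons,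
        AW_cons_add_one _ _ _ (mem_Ioo.1 hm).1, ← Jlet_inr_mul]
      ring

lemma AstarW_map_inr_eq_Amap_dW (q : ℝ) (v : List ℕ+) (M : ℕ) :
    AstarW q (v.map Sum.inr) M = Amap q (toD (dW v)) M := by
  induction v generalizing M with
  | nil => simp [dW, MonoidAlgebra.one_def, Amap_toD_single, AW_nil, AstarW_nil]
  | cons k v ih =>
    rw [dW, toD_add, Amap_add, Amap_toD_xiX_mul, Amap_toD_circ, ← sum_add_distrib,
      List.map_cons, AstarW_cons]
    refine sum_congr rfl fun m _ => ?_
    rw [ih]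
    ring

theorem Astar_eq_A_d_general (q : ℝ) (v : DXi) (M : ℕ) :
    Astarmap q (toD v) M = Amap q (toD (dmap v)) M := by
  induction v using MonoidAlgebra.induction_linear with
  | zero => simp
  | add x y hx hy => simp [hx, hy]
  | single w a =>
    rw [toD_single, Astarmap_single, FreeMonoid.toList_map, AstarW_map_inr_eq_Amap_dW, dmap_single,
      toD_smul, Amap_smul]

/-- For every `v ∈ 𝔡_ξ` and every integer `M ≥ 1`, `A*_v(M) = A_{d(v)}(M)`. -/
theorem Astar_eq_A_d (q : ℝ) (hq0 : 0 < q) (hq1 : q < 1) (v : DXi) (M : ℕ) (hM : 1 ≤ M) :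
    Astarmap q (toD v) M = Amap q (toD (dmap v)) M :=
  Astar_eq_A_d_general q v M

end
end

section
/- For every integer s ≥ 0, one has Z_s(1) = 1 if s = 0 and Z_s(1) = 0 if s ≥ 1. -/
/-!
Two independent computations. First, `Σ_ℓ Φ_ℓ tˡ` is the inverse of `Σ_s φ_s tˢ`, and
`Σ_{j+k=t} (-1)ᵏ φ_j(ξ₁ᵏ) = δ_{t,0}` (by induction on `t`, from
`φ_j(ξ₁ w) = ξ₁ Σ_{i+m=j} z₁ⁱ φ_m(w)`), so `Φ_ℓ(1) = (-1)^ℓ ξ₁^ℓ` and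
`Z_s(1) = Σ_ℓ (-1)^ℓ R(s-ℓ, ℓ)` with `R(m, ℓ) = ρ(d(ξ₁^m), ξ₁^ℓ)`.
Second, `d(ξ₁^{m+1}) = Σ_{k ≤ m} ξ_{k+1} d(ξ₁^{m-k})`; feeding this into the recursion of `ρ`
gives, with `S(ℓ, n) = Σ_{k<n} ξ_{k+1} R(n-1-k, ℓ)`,
`R(n, ℓ+1) = S(ℓ+1, n) + S(ℓ, n+1)` and `R(n+1, 0) = S(0, n+1)`.
So for `s ≥ 1` the alternating sum telescopes to `±S(s, 0) = 0`.
-/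

open scoped BigOperators

noncomputable section

attribute [local instance 10] Classical.propDecidable

open Finset

lemma sum_range_neg_one_pow_smul_eq_zero {M : Type*} [AddCommGroup M] {R S : ℕ → ℕ → M}
    (hS : ∀ l, S l 0 = 0) (hR₀ : ∀ n, R (n + 1) 0 = S 0 (n + 1))
    (hR : ∀ n l, R n (l + 1) = S (l + 1) n + S l (n + 1)) (s : ℕ) :
    ∑ l ∈ range (s + 2), (-1 : ℤ) ^ l • R (s + 1 - l) l = 0 := by
  set a : ℕ → M := fun l => (-1 : ℤ) ^ l • S l (s + 1 - l)
  have hterm : ∀ l ∈ range (s + 1),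
      (-1 : ℤ) ^ (l + 1) • R (s + 1 - (l + 1)) (l + 1) = a (l + 1) - a l := by
    intro l hl
    have hl : s + 1 - l = s - l + 1 := by rw [mem_range] at hl; omega
    simp only [a, hR, Nat.add_sub_add_right, hl, smul_add, pow_succ, mul_neg_one, neg_smul]
    abel
  rw [sum_range_succ', sum_congr rfl hterm, sum_range_sub]
  simp [a, hR₀, hS]

lemma sum_antidiagonal_sum_antidiagonal {M : Type*} [AddCommMonoid M] (n : ℕ)
    (f : ℕ → ℕ → ℕ → M) :
    ∑ p ∈ antidiagonal n, ∑ q ∈ antidiagonal p.1, f q.1 q.2 p.2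
      = ∑ p ∈ antidiagonal n, ∑ q ∈ antidiagonal p.2, f p.1 q.1 q.2 := by
  rw [sum_sigma', sum_sigma']
  refine sum_nbij' (fun x => ⟨(x.2.1, x.2.2 + x.1.2), (x.2.2, x.1.2)⟩)
    (fun x => ⟨(x.1.1 + x.2.1, x.2.2), (x.1.1, x.2.1)⟩) ?_ ?_ ?_ ?_ (fun _ _ => rfl) <;>
  · rintro ⟨⟨i, j⟩, k, l⟩ h
    simp only [mem_sigma, HasAntidiagonal.mem_antidiagonal, and_true] at h ⊢
    first | omega | (obtain ⟨rfl, rfl⟩ := h; rfl)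

section WordLift

variable {X M : Type*} [AddCommGroup M]

def wordLift (f : FreeMonoid X → M) : MonoidAlgebra ℤ (FreeMonoid X) →+ M where
  toFun x := x.coeff.sum fun w a => a • f w
  map_zero' := Finsupp.sum_zero_index
  map_add' _ _ := Finsupp.sum_add_index' (fun _ => zero_smul _ _) (fun _ _ _ => add_smul _ _ _)

lemma wordLift_apply (f : FreeMonoid X → M) (x : MonoidAlgebra ℤ (FreeMonoid X)) :
    wordLift f x = x.coeff.sum fun w a => a • f w := rfl

@[simp]
lemma wordLift_single (f : FreeMonoid X → M) (w : FreeMonoid X) (a : ℤ) :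
    wordLift f (MonoidAlgebra.single w a) = a • f w := by
  simp [wordLift_apply]

lemma single_of_pow (x : X) (m : ℕ) :
    (MonoidAlgebra.single (FreeMonoid.of x) (1 : ℤ)) ^ m
      = MonoidAlgebra.single (FreeMonoid.ofList (List.replicate m x)) 1 := by
  rw [MonoidAlgebra.single_pow, one_pow]
  congr 1
  induction m with
  | zero => rfl
  | succ m ih => rw [pow_succ, ih, List.replicate_succ']; rfl

end WordLift

lemma circ_eq_wordLift (k : ℕ+) : circ k = wordLift fun w => circW k w.toList := rfl

lemma dmap_eq_wordLift : dmap = wordLift fun w => dW w.toList := rfl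

lemma phi_eq_wordLift (s : ℕ) : phi s = wordLift fun w => phiW s w.toList := rfl

lemma toD_eq_mapDomainRingHom :
    toD = MonoidAlgebra.mapDomainRingHom ℤ (FreeMonoid.map Sum.inr) := rfl

lemma toD1_eq_mapDomainRingHom :
    toD1 = MonoidAlgebra.mapDomainRingHom ℤ
      (FreeMonoid.map fun b => if b then Sum.inr 1 else Sum.inl 1) := rfl

def rhoHom : DXi →+ Dfree →+ Dfree :=
  wordLift fun v => wordLift fun w => rhoW v.toList w.toList

lemma rho_eq_rhoHom (v : DXi) (x : Dfree) : rho v x = rhoHom v x := by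
  simp only [rho, rhoHom, wordLift_apply, AddMonoidHom.finsuppSum_apply, AddMonoidHom.smul_apply,
    Finsupp.smul_sum, mul_smul]

lemma rhoHom_single_single (v : FreeMonoid ℕ+) (a : ℤ) (w : FreeMonoid Letter) (b : ℤ) :
    rhoHom (MonoidAlgebra.single v a) (MonoidAlgebra.single w b)
      = (a * b) • rhoW v.toList w.toList := by
  simp [rhoHom, mul_smul]

lemma rho_one_left (x : Dfree) : rho 1 x = x := by
  suffices rhoHom 1 = AddMonoidHom.id Dfree from by rw [rho_eq_rhoHom, this]; rfl
  refine MonoidAlgebra.addMonoidHom_ext fun w b => ?_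
  rw [MonoidAlgebra.one_def, rhoHom_single_single, one_mul, FreeMonoid.toList_one, rhoW,
    MonoidAlgebra.smul_single, smul_eq_mul, mul_one]
  rfl

lemma rho_sum_left {ι : Type*} (s : Finset ι) (v : ι → DXi) (x : Dfree) :
    rho (∑ i ∈ s, v i) x = ∑ i ∈ s, rho (v i) x := by
  simp only [rho_eq_rhoHom, map_sum, AddMonoidHom.finsetSum_apply]

lemma rhoW_nil_right (v : List ℕ+) :
    rhoW v [] = MonoidAlgebra.single (FreeMonoid.ofList (v.map Sum.inr)) 1 := by
  cases v with
  | nil => rw [rhoW]; rfl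
  | cons => rw [rhoW]

lemma rho_one_right (v : DXi) : rho v 1 = toD v := by
  rw [rho_eq_rhoHom, toD_eq_mapDomainRingHom]
  induction v using MonoidAlgebra.induction_linear with
  | zero => simp
  | add v v' hv hv' => rw [map_add, map_add, AddMonoidHom.add_apply, hv, hv']
  | single vw a =>
    rw [MonoidAlgebra.one_def, rhoHom_single_single, mul_one, FreeMonoid.toList_one,
      rhoW_nil_right, MonoidAlgebra.smul_single, smul_eq_mul, mul_one,
      MonoidAlgebra.mapDomainRingHom_apply, MonoidAlgebra.mapDomain_single]
    rfl

lemma rho_xiX_mul_xiL_mul (k l : ℕ+) (v : DXi) (x : Dfree) :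
    rho (xiX k * v) (xiL l * x)
      = xiL k * rho v (xiL l * x) + xiL l * rho (xiX k * v) x + xiL (k + l) * rho v x := by
  simp only [rho_eq_rhoHom]
  induction v using MonoidAlgebra.induction_linear with
  | zero => simp
  | add v v' hv hv' => simp only [mul_add, map_add, AddMonoidHom.add_apply, hv, hv']; abel
  | single vw a =>
    induction x using MonoidAlgebra.induction_linear with
    | zero => simp
    | add x x' hx hx' => simp only [mul_add, map_add, hx, hx']; abel
    | single xw b =>
      simp only [xiX, xiL, MonoidAlgebra.single_mul_single, one_mul, rhoHom_single_single,
        FreeMonoid.toList_mul, FreeMonoid.toList_of, List.singleton_append]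
      rw [rhoW]
      simp only [smul_add, mul_smul_comm]
      rfl

lemma circ_xiX_mul (k l : ℕ+) (u : DXi) : circ k (xiX l * u) = xiX (k + l) * u := by
  rw [circ_eq_wordLift]
  induction u using MonoidAlgebra.induction_linear with
  | zero => simp
  | add u u' hu hu' => rw [mul_add, map_add, hu, hu', mul_add]
  | single w a =>
    simp only [xiX, MonoidAlgebra.single_mul_single, one_mul, wordLift_single,
      FreeMonoid.toList_mul, FreeMonoid.toList_of, List.singleton_append, circW,
      MonoidAlgebra.smul_single, smul_eq_mul, mul_one]
    rfl

lemma circ_one (k : ℕ+) : circ k 1 = 0 := by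
  rw [circ_eq_wordLift, MonoidAlgebra.one_def, wordLift_single, FreeMonoid.toList_one, circW,
    smul_zero]

def dPow (m : ℕ) : DXi := dmap (xiX 1 ^ m)

lemma dPow_eq_dW (m : ℕ) : dPow m = dW (List.replicate m 1) := by
  rw [dPow, xiX, single_of_pow, dmap_eq_wordLift, wordLift_single, one_smul]
  rfl

lemma dPow_zero : dPow 0 = 1 := by
  rw [dPow_eq_dW]; rfl

lemma dPow_succ_eq_add_circ (m : ℕ) : dPow (m + 1) = xiX 1 * dPow m + circ 1 (dPow m) := by
  rw [dPow_eq_dW, dPow_eq_dW, List.replicate_succ, dW]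

-- `d(ξ₁^m)` is the sum of all words `ξ_{c₁} ⋯ ξ_{c_r}` of weight `m`; split off the first letter.
lemma dPow_succ (m : ℕ) :
    dPow (m + 1) = ∑ k ∈ range (m + 1), xiX k.succPNat * dPow (m - k) := by
  induction m with
  | zero =>
    rw [dPow_succ_eq_add_circ, dPow_zero, circ_one, add_zero, mul_one, sum_range_one, dPow_zero,
      mul_one]
    rfl
  | succ m ih =>
    have hcirc : circ 1 (dPow (m + 1))
        = ∑ k ∈ range (m + 1), xiX (k + 1).succPNat * dPow (m - k) := by
      rw [ih, circ_eq_wordLift, map_sum]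
      refine sum_congr rfl fun k _ => ?_
      rw [← circ_eq_wordLift, circ_xiX_mul]
      congr 2
      exact PNat.eq (by simp [add_comm])
    rw [dPow_succ_eq_add_circ, hcirc, sum_range_succ' _ (m + 1)]
    simp only [Nat.succ_sub_succ, Nat.sub_zero]
    exact add_comm _ _

lemma toD_xiX (k : ℕ+) : toD (xiX k) = xiL k := by
  rw [toD_eq_mapDomainRingHom, MonoidAlgebra.mapDomainRingHom_apply, xiX,
    MonoidAlgebra.mapDomain_single]
  rfl

def rhoPow (m l : ℕ) : Dfree := rho (dPow m) (xiL 1 ^ l)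

def rhoPowConv (l n : ℕ) : Dfree := ∑ k ∈ range n, xiL k.succPNat * rhoPow (n - 1 - k) l

lemma rhoPowConv_zero (l : ℕ) : rhoPowConv l 0 = 0 := sum_range_zero _

lemma rhoPow_succ_zero (n : ℕ) : rhoPow (n + 1) 0 = rhoPowConv 0 (n + 1) := by
  rw [rhoPow, pow_zero, rho_one_right, dPow_succ, toD_eq_mapDomainRingHom, map_sum]
  refine sum_congr rfl fun k _ => ?_
  rw [map_mul, ← toD_eq_mapDomainRingHom, toD_xiX, rhoPow, pow_zero, rho_one_right,
    Nat.add_sub_cancel]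

lemma rhoPow_succ (n l : ℕ) : rhoPow n (l + 1) = rhoPowConv (l + 1) n + rhoPowConv l (n + 1) := by
  cases n with
  | zero =>
    rw [rhoPowConv_zero, zero_add, rhoPowConv, sum_range_one]
    simp only [rhoPow, zero_add, Nat.sub_self, dPow_zero, rho_one_left, pow_succ']
    rfl
  | succ m =>
    have hsplit : rhoPowConv l (m + 2)
        = xiL 1 * rhoPow (m + 1) l
          + ∑ k ∈ range (m + 1), xiL (k + 1).succPNat * rhoPow (m - k) l := by
      rw [rhoPowConv, sum_range_succ']
      simp only [Nat.sub_zero, Nat.succ_sub_succ]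
      exact add_comm _ _
    have hterm : ∀ k ∈ range (m + 1), rho (xiX k.succPNat * dPow (m - k)) (xiL 1 * xiL 1 ^ l)
        = xiL k.succPNat * rhoPow (m - k) (l + 1)
          + xiL 1 * rho (xiX k.succPNat * dPow (m - k)) (xiL 1 ^ l)
          + xiL (k + 1).succPNat * rhoPow (m - k) l := by
      intro k _
      rw [rho_xiX_mul_xiL_mul, rhoPow, rhoPow, pow_succ']
      congr 3
    have hmid : ∑ k ∈ range (m + 1), xiL 1 * rho (xiX k.succPNat * dPow (m - k)) (xiL 1 ^ l)
        = xiL 1 * rhoPow (m + 1) l := by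
      rw [← mul_sum, ← rho_sum_left, ← dPow_succ, rhoPow]
    rw [rhoPow, dPow_succ, pow_succ', rho_sum_left, sum_congr rfl hterm, sum_add_distrib,
      sum_add_distrib, hmid, hsplit, rhoPowConv, Nat.add_sub_cancel]
    abel

lemma phiW_zero (w : List Bool) : phiW 0 w = MonoidAlgebra.single (FreeMonoid.ofList w) 1 := by
  induction w with
  | nil => rw [phiW, if_pos rfl, MonoidAlgebra.one_def]; rfl
  | cons b w ih =>
    cases b <;>
    · simp only [phiW, Icc_eq_empty_of_lt zero_lt_one, sum_empty, add_zero, zero_add,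
        range_one, sum_singleton, pow_zero, mul_one, ih, zO, xiO, MonoidAlgebra.single_mul_single]
      rfl

lemma phi_zero (x : DOne) : phi 0 x = x := by
  rw [phi_eq_wordLift]
  induction x using MonoidAlgebra.induction_linear with
  | zero => exact map_zero _
  | add x y hx hy => rw [map_add, hx, hy]
  | single w a =>
    rw [wordLift_single, phiW_zero, MonoidAlgebra.smul_single, smul_eq_mul, mul_one]
    rfl

lemma phi_succ_one (j : ℕ) : phi (j + 1) 1 = xiO * zO ^ j := by
  rw [phi_eq_wordLift, MonoidAlgebra.one_def, wordLift_single, one_smul, FreeMonoid.toList_one,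
    phiW, if_neg j.succ_ne_zero, zO, single_of_pow, xiO, MonoidAlgebra.single_mul_single, one_mul,
    Nat.add_sub_cancel]
  rfl

lemma phi_xiO_mul (j : ℕ) (x : DOne) :
    phi j (xiO * x) = ∑ p ∈ antidiagonal j, xiO * zO ^ p.1 * phi p.2 x := by
  rw [Nat.sum_antidiagonal_eq_sum_range_succ (fun i k => xiO * zO ^ i * phi k x)]
  simp only [phi_eq_wordLift]
  induction x using MonoidAlgebra.induction_linear with
  | zero => simp
  | add x y hx hy => simp only [mul_add, map_add, hx, hy, sum_add_distrib]
  | single w a =>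
    simp only [xiO, MonoidAlgebra.single_mul_single, one_mul, wordLift_single,
      FreeMonoid.toList_mul, FreeMonoid.toList_of, List.singleton_append, phiW, smul_sum,
      mul_smul_comm]

lemma sum_antidiagonal_phi_xiO_pow (t : ℕ) :
    ∑ p ∈ antidiagonal t, (-1 : ℤ) ^ p.2 • phi p.1 (xiO ^ p.2) = if t = 0 then 1 else 0 := by
  induction t using Nat.strong_induction_on with
  | _ t ih =>
  cases t with
  | zero => simp [phi_zero]
  | succ l =>
    have hrest : ∑ p ∈ antidiagonal l, (-1 : ℤ) ^ (p.2 + 1) • phi p.1 (xiO ^ (p.2 + 1))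
        = -(xiO * zO ^ l) := by
      calc _ = -∑ p ∈ antidiagonal l, ∑ q ∈ antidiagonal p.1,
                xiO * zO ^ q.1 * ((-1 : ℤ) ^ p.2 • phi q.2 (xiO ^ p.2)) := by
            simp only [pow_succ', phi_xiO_mul, smul_sum, mul_smul_comm, neg_one_mul, neg_smul,
              sum_neg_distrib]
        _ = -∑ p ∈ antidiagonal l, xiO * zO ^ p.1 *
              ∑ q ∈ antidiagonal p.2, (-1 : ℤ) ^ q.2 • phi q.1 (xiO ^ q.2) := by
            rw [sum_antidiagonal_sum_antidiagonal l
              (fun i k m => xiO * zO ^ i * ((-1 : ℤ) ^ m • phi k (xiO ^ m)))]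
            simp only [mul_sum]
        _ = -(xiO * zO ^ l) := by
            rw [sum_eq_single (l, 0)]
            · rw [ih 0 l.succ_pos, if_pos rfl, mul_one]
            · rintro ⟨i, k⟩ hp hne
              rw [HasAntidiagonal.mem_antidiagonal] at hp
              rw [ih k (by omega), if_neg (by rintro rfl; exact hne (by simp_all)), mul_zero]
            · simp
    rw [if_neg l.succ_ne_zero, Nat.sum_antidiagonal_succ', hrest, pow_zero, pow_zero, one_smul,
      phi_succ_one, add_neg_cancel]

lemma mem_Ifin {r n : ℕ} {c : Fin r → ℕ} : c ∈ Ifin r n ↔ (∀ i, 1 ≤ c i) ∧ ∑ i, c i = n := by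
  simp only [Ifin, mem_filter, Fintype.mem_piFinset, mem_Icc]
  refine ⟨fun h => ⟨fun i => (h.1 i).1, h.2⟩, fun h => ⟨fun i => ⟨h.1 i, ?_⟩, h.2⟩⟩
  exact h.2 ▸ single_le_sum (fun j _ => Nat.zero_le (c j)) (mem_univ i)

lemma Ifin_eq_empty_of_lt {r n : ℕ} (h : n < r) : Ifin r n = ∅ := by
  refine eq_empty_of_forall_notMem fun c hc => ?_
  rw [mem_Ifin] at hc
  have : r ≤ ∑ i, c i := by simpa using sum_le_sum fun i (_ : i ∈ univ) => hc.1 i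
  omega

lemma Ifin_zero_succ (n : ℕ) : Ifin 0 (n + 1) = ∅ :=
  eq_empty_of_forall_notMem fun c hc => by simp [mem_Ifin] at hc

lemma Ifin_zero_zero : Ifin 0 0 = {Fin.elim0} :=
  eq_singleton_iff_unique_mem.mpr ⟨by simp [mem_Ifin], fun _ _ => Subsingleton.elim _ _⟩

lemma sum_Ifin_succ_succ {M : Type*} [AddCommMonoid M] (r n : ℕ) (f : (Fin (r + 1) → ℕ) → M) :
    ∑ c ∈ Ifin (r + 1) (n + 1), f c
      = ∑ p ∈ antidiagonal n, ∑ c ∈ Ifin r p.2, f (Fin.cons (p.1 + 1) c) := by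
  have hcons : ∀ c ∈ Ifin (r + 1) (n + 1), (Fin.cons (c 0 - 1 + 1) (Fin.tail c) : Fin _ → ℕ) = c :=
    fun c hc => by rw [Nat.sub_add_cancel ((mem_Ifin.mp hc).1 0), Fin.cons_self_tail]
  rw [sum_sigma']
  refine sum_nbij' (fun c => ⟨(c 0 - 1, n + 1 - c 0), Fin.tail c⟩)
    (fun x => Fin.cons (x.1.1 + 1) x.2) ?_ ?_ hcons ?_ fun c hc => by rw [hcons c hc]
  · intro c hc
    simp only [mem_Ifin, Fin.sum_univ_succ] at hc
    simp only [mem_sigma, HasAntidiagonal.mem_antidiagonal, mem_Ifin, Fin.tail]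
    exact ⟨by have := hc.1 0; omega, fun i => hc.1 i.succ, by omega⟩
  · rintro ⟨⟨i, k⟩, c⟩ hc
    simp only [mem_sigma, HasAntidiagonal.mem_antidiagonal, mem_Ifin] at hc
    simp only [mem_Ifin, Fin.sum_cons, Fin.forall_fin_succ, Fin.cons_zero, Fin.cons_succ]
    exact ⟨⟨by omega, hc.2.1⟩, by omega⟩
  · rintro ⟨⟨i, k⟩, c⟩ hc
    simp only [mem_sigma, HasAntidiagonal.mem_antidiagonal] at hc
    simp only [Fin.cons_zero, Fin.tail_cons, Nat.add_sub_cancel, Sigma.mk.injEq, Prod.mk.injEq,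
      heq_eq_eq, and_true, true_and]
    omega

def phiComp {r : ℕ} (c : Fin r → ℕ) : DOne → DOne :=
  (List.ofFn fun j => phi (c j)).foldr (· ∘ ·) id

lemma phiComp_cons {r : ℕ} (k : ℕ) (c : Fin r → ℕ) (x : DOne) :
    phiComp (Fin.cons k c : Fin (r + 1) → ℕ) x = phi k (phiComp c x) := by
  simp only [phiComp, List.ofFn_succ, Fin.cons_zero, Fin.cons_succ, List.foldr_cons,
    Function.comp_apply]

lemma PhiM_succ_eq_sum (l : ℕ) (x : DOne) :
    PhiM (l + 1) x = ∑ r ∈ Icc 1 (l + 1), (-1 : ℤ) ^ r • ∑ c ∈ Ifin r (l + 1), phiComp c x :=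
  rfl

lemma PhiM_eq_sum_range {m N : ℕ} (h : m < N) (x : DOne) :
    PhiM m x = ∑ r ∈ range N, (-1 : ℤ) ^ r • ∑ c ∈ Ifin r m, phiComp c x := by
  cases m with
  | zero =>
    rw [sum_eq_single_of_mem 0 (mem_range.2 h)]
    · simp only [Ifin_zero_zero, sum_singleton, pow_zero, one_smul]
      rfl
    · intro r _ hr
      rw [Ifin_eq_empty_of_lt (Nat.pos_of_ne_zero hr), sum_empty, smul_zero]
  | succ m =>
    rw [PhiM_succ_eq_sum]
    refine sum_subset (fun r hr => ?_) fun r _ hr => ?_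
    · rw [mem_Icc] at hr
      rw [mem_range]
      omega
    · rcases Nat.eq_zero_or_pos r with rfl | hr₀
      · rw [Ifin_zero_succ, sum_empty, smul_zero]
      · rw [mem_Icc] at hr
        rw [Ifin_eq_empty_of_lt (by omega), sum_empty, smul_zero]

lemma PhiM_succ (n : ℕ) (x : DOne) :
    PhiM (n + 1) x = -∑ p ∈ antidiagonal n, phi (p.1 + 1) (PhiM p.2 x) := by
  calc PhiM (n + 1) x
      = ∑ r ∈ range (n + 1), (-1 : ℤ) ^ (r + 1) • ∑ c ∈ Ifin (r + 1) (n + 1), phiComp c x := by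
        rw [PhiM_eq_sum_range (n + 1).lt_succ_self, sum_range_succ', Ifin_zero_succ, sum_empty,
          smul_zero, add_zero]
    _ = -∑ p ∈ antidiagonal n, ∑ r ∈ range (n + 1),
          (-1 : ℤ) ^ r • ∑ c ∈ Ifin r p.2, phi (p.1 + 1) (phiComp c x) := by
        simp only [sum_Ifin_succ_succ, phiComp_cons, pow_succ, mul_neg_one, neg_smul, smul_sum,
          sum_neg_distrib]
        rw [sum_comm]
    _ = -∑ p ∈ antidiagonal n, phi (p.1 + 1) (PhiM p.2 x) := by
        congr 1
        refine sum_congr rfl fun p hp => ?_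
        rw [HasAntidiagonal.mem_antidiagonal] at hp
        rw [PhiM_eq_sum_range (N := n + 1) (by omega), phi_eq_wordLift]
        simp only [map_sum, map_zsmul]

lemma PhiM_one (l : ℕ) : PhiM l 1 = (-1 : ℤ) ^ l • xiO ^ l := by
  induction l using Nat.strong_induction_on with
  | _ l ih =>
  cases l with
  | zero => simp [PhiM]
  | succ n =>
    have hW := sum_antidiagonal_phi_xiO_pow (n + 1)
    rw [if_neg n.succ_ne_zero, Nat.sum_antidiagonal_succ, phi_zero] at hW
    dsimp only at hW
    rw [PhiM_succ, eq_neg_of_add_eq_zero_left hW]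
    congr 1
    refine sum_congr rfl fun p hp => ?_
    rw [HasAntidiagonal.mem_antidiagonal] at hp
    rw [ih p.2 (by omega), phi_eq_wordLift, map_zsmul]

lemma toD1_xiO_pow (l : ℕ) : toD1 (xiO ^ l) = xiL 1 ^ l := by
  rw [toD1_eq_mapDomainRingHom, map_pow, MonoidAlgebra.mapDomainRingHom_apply, xiO,
    MonoidAlgebra.mapDomain_single]
  rfl

lemma Zmap_one (s : ℕ) : Zmap s 1 = ∑ l ∈ range (s + 1), (-1 : ℤ) ^ l • rhoPow (s - l) l := by
  refine sum_congr rfl fun l _ => ?_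
  rw [PhiM_one, toD1_eq_mapDomainRingHom, map_zsmul, ← toD1_eq_mapDomainRingHom, toD1_xiO_pow,
    rho_eq_rhoHom, map_zsmul, ← rho_eq_rhoHom]
  rfl

/-- For every integer `s ≥ 0`, `Z_s(1) = 1` if `s = 0` and `Z_s(1) = 0` if `s ≥ 1`. -/
theorem Z_one (s : ℕ) : Zmap s 1 = if s = 0 then 1 else 0 := by
  rw [Zmap_one]
  cases s with
  | zero => simp [rhoPow, dPow_zero, rho_one_left]
  | succ s =>
    rw [if_neg s.succ_ne_zero]
    exact sum_range_neg_one_pow_smul_eq_zero rhoPowConv_zero rhoPow_succ_zero rhoPow_succ s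

end
end
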